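/- Let n ≥ 1 and let u : ℝⁿ → ℝ be smooth with u > 0 everywhere. Set A := −Δu, w := log ∘ u, and Q := ‖∇w‖² + A·u⁻¹. Suppose Q attains a local maximum at a point p ∈ ℝⁿ with Q(p) > 0. Then for every b > 0, at least one of the following holds при p: either Q(p) ≤ 2n(b − A(p)/u(p)), or Q(p)² ≤ n·( A(p)²/u(p)² + ‖∇A(p)‖²/(2b·u(p)²) − 2b·A(p)/u(p) − ΔA(p)/u(p) ). -/

import Mathlib

open scoped BigOperators
open scoped RealInnerProductSpace

/-- The gradient of `f : ℝⁿ → ℝ`. -/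
noncomputable def egrad {n : ℕ} (f : EuclideanSpace ℝ (Fin n) → ℝ)
    (x : EuclideanSpace ℝ (Fin n)) : EuclideanSpace ℝ (Fin n) := gradient f x

/-- The partial derivative of `f` in the `i`-th coordinate direction. -/
noncomputable def epd {n : ℕ} (i : Fin n) (f : EuclideanSpace ℝ (Fin n) → ℝ)
    (x : EuclideanSpace ℝ (Fin n)) : ℝ := fderiv ℝ f x (EuclideanSpace.single i 1)

/-- The Laplacian `Δf = ∑ᵢ ∂ᵢ∂ᵢ f` (trace of the Hessian). -/
noncomputable def elap {n : ℕ} (f : EuclideanSpace ℝ (Fin n) → ℝ)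
    (x : EuclideanSpace ℝ (Fin n)) : ℝ := ∑ i, epd i (epd i f) x

/-- The squared Hilbert–Schmidt norm `‖D²f‖²` of the Hessian of `f`. -/
noncomputable def ehess2 {n : ℕ} (f : EuclideanSpace ℝ (Fin n) → ℝ)
    (x : EuclideanSpace ℝ (Fin n)) : ℝ := ∑ i, ∑ j, (epd i (epd j f) x) ^ 2

section Aux

variable {n : ℕ}

lemma contDiff_epd (i : Fin n) {f : EuclideanSpace ℝ (Fin n) → ℝ} (hf : ContDiff ℝ (⊤:ℕ∞) f) :
    ContDiff ℝ (⊤:ℕ∞) (epd i f) :=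
  (hf.fderiv_right (by exact_mod_cast le_top)).clm_apply contDiff_const

lemma epd_of_hasFDerivAt {f : EuclideanSpace ℝ (Fin n) → ℝ}
    {x : EuclideanSpace ℝ (Fin n)} {L : EuclideanSpace ℝ (Fin n) →L[ℝ] ℝ}
    (h : HasFDerivAt f L x) (i : Fin n) : epd i f x = L (EuclideanSpace.single i 1) := by
  rw [epd, h.fderiv]

lemma epd_add {f g : EuclideanSpace ℝ (Fin n) → ℝ} {x} (hf : DifferentiableAt ℝ f x)
    (hg : DifferentiableAt ℝ g x) (i : Fin n) :
    epd i (fun y => f y + g y) x = epd i f x + epd i g x := by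
  rw [epd, fderiv_fun_add hf hg]; simp [epd]

lemma epd_mul {f g : EuclideanSpace ℝ (Fin n) → ℝ} {x} (hf : DifferentiableAt ℝ f x)
    (hg : DifferentiableAt ℝ g x) (i : Fin n) :
    epd i (fun y => f y * g y) x = epd i f x * g x + f x * epd i g x := by
  rw [epd, fderiv_fun_mul hf hg]; simp [epd]; ring

lemma epd_const_mul {f : EuclideanSpace ℝ (Fin n) → ℝ} {x} (hf : DifferentiableAt ℝ f x)
    (c : ℝ) (i : Fin n) :
    epd i (fun y => c * f y) x = c * epd i f x := by
  rw [epd, fderiv_const_mul hf]; simp [epd]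

lemma epd_sum {m : ℕ} {f : Fin m → (EuclideanSpace ℝ (Fin n) → ℝ)} {x}
    (hf : ∀ j, DifferentiableAt ℝ (f j) x) (i : Fin n) :
    epd i (fun y => ∑ j, f j y) x = ∑ j, epd i (f j) x := by
  rw [epd, fderiv_fun_sum (fun j _ => hf j)]; simp [epd]

lemma epd_neg {f : EuclideanSpace ℝ (Fin n) → ℝ} {x} (i : Fin n) :
    epd i (fun y => -f y) x = -epd i f x := by
  rw [epd, fderiv_fun_neg]; simp [epd]

lemma epd_sq {f : EuclideanSpace ℝ (Fin n) → ℝ} {x} (hf : DifferentiableAt ℝ f x) (i : Fin n) :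
    epd i (fun y => f y ^ 2) x = 2 * f x * epd i f x := by
  simp only [pow_two]
  rw [epd_mul hf hf]; ring

lemma epd_inv {f : EuclideanSpace ℝ (Fin n) → ℝ} {x} (hf : DifferentiableAt ℝ f x)
    (hx : f x ≠ 0) (i : Fin n) :
    epd i (fun y => (f y)⁻¹) x = -(epd i f x) * ((f x) ^ 2)⁻¹ := by
  have H : HasFDerivAt (fun y => (f y)⁻¹) ((-(f x ^ 2)⁻¹) • fderiv ℝ f x) x :=
    (hasDerivAt_inv hx).comp_hasFDerivAt x hf.hasFDerivAt
  rw [epd_of_hasFDerivAt H]; simp [epd]; ring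

lemma epd_log {u : EuclideanSpace ℝ (Fin n) → ℝ} {x} (hu : DifferentiableAt ℝ u x)
    (hx : u x ≠ 0) (i : Fin n) :
    epd i (fun y => Real.log (u y)) x = epd i u x * (u x)⁻¹ := by
  have H : HasFDerivAt (fun y => Real.log (u y)) ((u x)⁻¹ • fderiv ℝ u x) x :=
    (Real.hasDerivAt_log hx).comp_hasFDerivAt x hu.hasFDerivAt
  rw [epd_of_hasFDerivAt H]; simp [epd]; ring

lemma egrad_apply (f : EuclideanSpace ℝ (Fin n) → ℝ) (x : EuclideanSpace ℝ (Fin n)) (i : Fin n) :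
    egrad f x i = epd i f x := by
  have h : (inner ℝ (egrad f x) (EuclideanSpace.single i (1:ℝ)) : ℝ)
      = fderiv ℝ f x (EuclideanSpace.single i 1) :=
    InnerProductSpace.toDual_symm_apply
  rw [EuclideanSpace.inner_single_right] at h
  simpa [epd] using h

lemma norm_egrad_sq (f : EuclideanSpace ℝ (Fin n) → ℝ) (x : EuclideanSpace ℝ (Fin n)) :
    ‖egrad f x‖ ^ 2 = ∑ i, (epd i f x) ^ 2 := by
  rw [EuclideanSpace.norm_eq, Real.sq_sqrt (by positivity)]
  simp [egrad_apply, sq_abs]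

lemma epd_comm {f : EuclideanSpace ℝ (Fin n) → ℝ} (hf : ContDiff ℝ (⊤:ℕ∞) f)
    (i j : Fin n) (x : EuclideanSpace ℝ (Fin n)) :
    epd i (epd j f) x = epd j (epd i f) x := by
  have hd : Differentiable ℝ (fderiv ℝ f) :=
    (hf.fderiv_right (m := (⊤:ℕ∞)) (by exact_mod_cast le_top)).differentiable
      (by simp)
  have key : ∀ (a b : Fin n),
      epd a (epd b f) x
        = fderiv ℝ (fderiv ℝ f) x (EuclideanSpace.single a 1) (EuclideanSpace.single b 1) := by
    intro a b
    have h0 : (fun y => fderiv ℝ f y (EuclideanSpace.single b 1)) = epd b f := rfl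
    rw [epd, ← h0, fderiv_clm_apply (hd x) (differentiableAt_const _)]
    simp
  rw [key i j, key j i]
  exact second_derivative_symmetric
    (fun y => ((hf.differentiable (by simp)) y).hasFDerivAt)
    (hd x).hasFDerivAt _ _

lemma sd_test {g : ℝ → ℝ} (hg : ContDiff ℝ (⊤ : ℕ∞) g) (h : IsLocalMax g 0) :
    deriv (deriv g) 0 ≤ 0 := by
  by_contra hc
  push_neg at hc
  have hg1 : ContDiff ℝ (⊤ : ℕ∞) (deriv g) := (contDiff_infty_iff_deriv.mp hg).2
  have hcont : Continuous (deriv (deriv g)) := hg1.continuous_deriv (by exact_mod_cast le_top)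
  have hev : ∀ᶠ x in nhds (0:ℝ), 0 < deriv (deriv g) x :=
    continuousAt_const.eventually_lt hcont.continuousAt hc
  obtain ⟨δ, hδpos, hδ⟩ := Metric.eventually_nhds_iff.mp (hev.and h)
  have hd0 : deriv g 0 = 0 := h.deriv_eq_zero
  have smono : StrictMonoOn (deriv g) (Set.Ioo (-δ) δ) := by
    apply strictMonoOn_of_deriv_pos (convex_Ioo _ _) hg1.continuous.continuousOn
    intro x hx
    rw [interior_Ioo] at hx
    exact (hδ (by simpa [Real.dist_eq, abs_lt] using hx)).1
  have hposd : ∀ x ∈ Set.Ioo (0:ℝ) δ, 0 < deriv g x := by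
    intro x hx
    have := smono (⟨by linarith, hδpos⟩ : (0:ℝ) ∈ Set.Ioo (-δ) δ)
      (⟨by linarith [hx.1], hx.2⟩ : x ∈ Set.Ioo (-δ) δ) hx.1
    rwa [hd0] at this
  have gmono : StrictMonoOn g (Set.Icc 0 (δ/2)) := by
    apply strictMonoOn_of_deriv_pos (convex_Icc _ _) hg.continuous.continuousOn
    intro x hx
    rw [interior_Icc] at hx
    exact hposd x ⟨hx.1, by linarith [hx.2]⟩
  have h1 : g 0 < g (δ/2) :=
    gmono (Set.left_mem_Icc.2 (by linarith)) (⟨by linarith, le_refl _⟩) (by linarith)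
  have h2 : g (δ/2) ≤ g 0 :=
    (hδ (by rw [Real.dist_eq, sub_zero, abs_of_pos (by linarith)]; linarith)).2
  linarith

lemma epd_epd_nonpos {Q : EuclideanSpace ℝ (Fin n) → ℝ} (hQ : ContDiff ℝ (⊤:ℕ∞) Q)
    {p} (hmax : IsLocalMax Q p) (i : Fin n) : epd i (epd i Q) p ≤ 0 := by
  set v := EuclideanSpace.single i (1:ℝ) with hv
  have hline : ∀ t : ℝ, HasDerivAt (fun s : ℝ => p + s • v) v t := fun t => by
    simpa using ((hasDerivAt_id t).smul_const v).const_add p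
  have hlinec : ContDiff ℝ (⊤:ℕ∞) (fun s : ℝ => p + s • v) :=
    contDiff_const.add (contDiff_id.smul contDiff_const)
  have hd : ∀ (F : EuclideanSpace ℝ (Fin n) → ℝ), Differentiable ℝ F →
      ∀ t, deriv (fun s => F (p + s • v)) t = fderiv ℝ F (p + t • v) v := fun F hF t =>
    ((hF _).hasFDerivAt.comp_hasDerivAt t (hline t)).deriv
  have hQdiff : Differentiable ℝ Q := hQ.differentiable (by simp)
  have hQ1 : ContDiff ℝ (⊤:ℕ∞) (epd i Q) := contDiff_epd i hQ
  set g : ℝ → ℝ := fun s => Q (p + s • v) with hg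
  have hgc : ContDiff ℝ (⊤:ℕ∞) g := hQ.comp hlinec
  have hmax' : IsLocalMax g 0 := by
    have ht : Filter.Tendsto (fun s : ℝ => p + s • v) (nhds 0) (nhds p) := by
      have := hlinec.continuous.tendsto (0:ℝ); simpa using this
    have h2 := ht.eventually hmax
    simp only [IsLocalMax, IsMaxFilter, hg]
    simpa using h2
  have h1 : deriv g = fun t => epd i Q (p + t • v) := funext fun t => hd Q hQdiff t
  have h2 : deriv (deriv g) 0 = epd i (epd i Q) p := by
    rw [h1]
    have := hd (epd i Q) (hQ1.differentiable (by simp)) 0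
    simpa [epd] using this
  rw [← h2]; exact sd_test hgc hmax'

end Aux

set_option maxHeartbeats 1000000 in
/-- For a positive smooth solution `u` of `-Δu = A` on `ℝⁿ`,
with `w = log u` and `Q = ‖∇w‖² + A/u`, at a local maximum point `p` of `Q`
with `Q(p) > 0`, for every `b > 0` either `Q(p) ≤ 2n(b − A(p)/u(p))` or
`Q(p)² ≤ n(A²/u² + ‖∇A‖²/(2bu²) − 2bA/u − ΔA/u)` at `p`. -/
theorem harnack_quantity_dichotomy (n : ℕ) (hn : 1 ≤ n)
    (u : EuclideanSpace ℝ (Fin n) → ℝ) (hu : ContDiff ℝ (⊤ : ℕ∞) u)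
    (hpos : ∀ x, 0 < u x)
    (A : EuclideanSpace ℝ (Fin n) → ℝ) (hA : A = fun x => -(elap u x))
    (w : EuclideanSpace ℝ (Fin n) → ℝ) (hw : w = Real.log ∘ u)
    (Q : EuclideanSpace ℝ (Fin n) → ℝ)
    (hQ : Q = fun x => ‖egrad w x‖ ^ 2 + A x * (u x)⁻¹)
    (p : EuclideanSpace ℝ (Fin n)) (hmax : IsLocalMax Q p) (hQp : 0 < Q p) :
    ∀ b : ℝ, 0 < b →
      Q p ≤ 2 * n * (b - A p / u p) ∨
      (Q p) ^ 2 ≤ n * ((A p) ^ 2 / (u p) ^ 2 + ‖egrad A p‖ ^ 2 / (2 * b * (u p) ^ 2)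
        - 2 * b * A p / u p - elap A p / u p) := by
  intro b hb
  have hu' : ContDiff ℝ (⊤:ℕ∞) u := hu.of_le (by simp)
  have hne : ∀ x, u x ≠ 0 := fun x => ne_of_gt (hpos x)
  have hudiff : Differentiable ℝ u := hu'.differentiable (by simp)
  have hdiffT : ∀ {f : EuclideanSpace ℝ (Fin n) → ℝ}, ContDiff ℝ (⊤:ℕ∞) f →
      Differentiable ℝ f := fun hf => hf.differentiable (by simp)
  -- smoothness of w
  have hw' : ContDiff ℝ (⊤:ℕ∞) w := by
    rw [hw, contDiff_iff_contDiffAt]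
    intro x
    exact (Real.contDiffAt_log.mpr (hne x)).comp x hu'.contDiffAt
  -- smoothness of A
  have hA' : ContDiff ℝ (⊤:ℕ∞) A := by
    rw [hA]
    exact (ContDiff.sum fun i _ => contDiff_epd i (contDiff_epd i hu')).neg
  -- first derivatives of w
  have h1 : ∀ j, epd j w = fun x => epd j u x * (u x)⁻¹ := by
    intro j; funext x
    rw [hw]
    exact epd_log (hudiff x) (hne x) j
  -- Q in coordinates
  have hQfun : Q = fun x => (∑ j, (epd j w x) ^ 2) + A x * (u x)⁻¹ := by
    rw [hQ]; funext x; rw [norm_egrad_sq]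
  have hQ' : ContDiff ℝ (⊤:ℕ∞) Q := by
    rw [hQfun]
    exact (ContDiff.sum fun j _ => (contDiff_epd j hw').pow 2).add
      (hA'.mul (hu'.inv hne))
  -- second derivatives of w
  have h2 : ∀ i, epd i (epd i w) = fun x =>
      epd i (epd i u) x * (u x)⁻¹ + epd i u x * (-(epd i u x) * ((u x) ^ 2)⁻¹) := by
    intro i; funext x
    rw [h1 i, epd_mul (g := fun y => (u y)⁻¹) (hdiffT (contDiff_epd i hu') x) ((hudiff x).inv (hne x)),
      epd_inv (hudiff x) (hne x)]
  -- elap w = -Q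
  have h3 : elap w = fun x => -(Q x) := by
    funext x
    have : elap w x = ∑ i, (epd i (epd i u) x * (u x)⁻¹
        + epd i u x * (-(epd i u x) * ((u x) ^ 2)⁻¹)) := by
      rw [elap]
      exact Finset.sum_congr rfl fun i _ => by rw [h2 i]
    rw [this, hQfun, hA]
    simp only [elap]
    have hsq : ∀ j, (epd j w x) ^ 2 = (epd j u x) ^ 2 * ((u x) ^ 2)⁻¹ := by
      intro j; rw [h1 j]; rw [mul_pow, inv_pow]
    rw [Finset.sum_congr rfl fun j _ => hsq j]
    rw [Finset.sum_add_distrib, ← Finset.sum_mul, ← Finset.sum_mul]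
    have h4 : ∑ i, epd i u x * (-(epd i u x) * ((u x) ^ 2)⁻¹)
        = -((∑ i, (epd i u x) ^ 2) * ((u x) ^ 2)⁻¹) := by
      rw [Finset.sum_mul, ← Finset.sum_neg_distrib]
      exact Finset.sum_congr rfl fun i _ => by ring
    rw [h4]
    ring
  -- first derivative of Q vanishes at p
  have hgrad0 : ∀ j, epd j Q p = 0 := by
    intro j
    rw [epd, hmax.fderiv_eq_zero]
    simp
  -- differentiability helpers
  have hwj : ∀ j, ContDiff ℝ (⊤:ℕ∞) (epd j w) := fun j => contDiff_epd j hw'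
  have hwij : ∀ i j, ContDiff ℝ (⊤:ℕ∞) (epd i (epd j w)) := fun i j =>
    contDiff_epd i (hwj j)
  have hui : ∀ i, ContDiff ℝ (⊤:ℕ∞) (epd i u) := fun i => contDiff_epd i hu'
  have hAi : ∀ i, ContDiff ℝ (⊤:ℕ∞) (epd i A) := fun i => contDiff_epd i hA'
  -- function-level first derivative of Q
  have hQd : ∀ i, epd i Q = fun x => (∑ j, 2 * epd j w x * epd i (epd j w) x)
      + (epd i A x * (u x)⁻¹ + A x * (-(epd i u x) * ((u x) ^ 2)⁻¹)) := by
    intro i; funext x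
    rw [hQfun, epd_add (f := fun y => ∑ j, epd j w y ^ 2) (g := fun y => A y * (u y)⁻¹)
      (DifferentiableAt.fun_sum fun j _ => (hdiffT (hwj j) x).pow 2)
      ((hdiffT hA' x).mul ((hudiff x).inv (hne x)))]
    congr 1
    · rw [epd_sum (f := fun j y => epd j w y ^ 2) (fun j => (hdiffT (hwj j) x).pow 2)]
      exact Finset.sum_congr rfl fun j _ => epd_sq (hdiffT (hwj j) x) i
    · rw [epd_mul (g := fun y => (u y)⁻¹) (hdiffT hA' x) ((hudiff x).inv (hne x)), epd_inv (hudiff x) (hne x)]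
  -- second derivative of Q at p, coordinate i
  have key : ∀ i, epd i (epd i Q) p =
      (∑ j, (2 * (epd i (epd j w) p) ^ 2
         + 2 * epd j w p * epd i (epd i (epd j w)) p))
      + (epd i (epd i A) p * (u p)⁻¹
         - 2 * epd i A p * epd i u p * ((u p) ^ 2)⁻¹
         - A p * epd i (epd i u) p * ((u p) ^ 2)⁻¹
         + 2 * A p * (epd i u p) ^ 2 * u p * (((u p) ^ 2) ^ 2)⁻¹) := by
    intro i
    have du2 : DifferentiableAt ℝ (fun x => (u x) ^ 2) p := (hudiff p).pow 2
    have du2ne : (fun x => (u x) ^ 2) p ≠ 0 := pow_ne_zero 2 (hne p)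
    have dinv2 : DifferentiableAt ℝ (fun x => ((u x) ^ 2)⁻¹) p := du2.inv du2ne
    have dS : ∀ j : Fin n, DifferentiableAt ℝ
        (fun x => 2 * epd j w x * epd i (epd j w) x) p :=
      fun j => ((hdiffT (hwj j) p).const_mul 2).mul (hdiffT (hwij i j) p)
    have dP1 : DifferentiableAt ℝ (fun x => epd i A x * (u x)⁻¹) p :=
      (hdiffT (hAi i) p).mul ((hudiff p).inv (hne p))
    have dg : DifferentiableAt ℝ (fun x => -(epd i u x) * ((u x) ^ 2)⁻¹) p :=
      (hdiffT (hui i) p).neg.mul dinv2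
    have dP2 : DifferentiableAt ℝ (fun x => A x * (-(epd i u x) * ((u x) ^ 2)⁻¹)) p :=
      (hdiffT hA' p).mul dg
    rw [hQd i]
    rw [epd_add (f := fun x => ∑ j, 2 * epd j w x * epd i (epd j w) x)
      (g := fun x => epd i A x * (u x)⁻¹ + A x * (-(epd i u x) * ((u x) ^ 2)⁻¹))
      (DifferentiableAt.fun_sum fun j _ => dS j) (dP1.add dP2)]
    rw [epd_sum dS]
    have eS : ∀ j : Fin n, epd i (fun x => 2 * epd j w x * epd i (epd j w) x) p
        = 2 * (epd i (epd j w) p) ^ 2 + 2 * epd j w p * epd i (epd i (epd j w)) p := by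
      intro j
      rw [epd_mul ((hdiffT (hwj j) p).const_mul 2) (hdiffT (hwij i j) p),
        epd_const_mul (hdiffT (hwj j) p)]
      ring
    rw [Finset.sum_congr rfl fun j _ => eS j]
    congr 1
    rw [epd_add dP1 dP2]
    rw [epd_mul (g := fun x => (u x)⁻¹) (hdiffT (hAi i) p) ((hudiff p).inv (hne p)), epd_inv (hudiff p) (hne p)]
    rw [epd_mul (hdiffT hA' p) dg]
    rw [epd_mul (f := fun x => -(epd i u x)) (hdiffT (hui i) p).neg dinv2]
    rw [epd_neg, epd_inv du2 du2ne]
    rw [epd_sq (hudiff p)]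
    ring
  -- sum of third derivatives vanishes at p
  have hthird : ∀ j, (∑ i, epd i (epd i (epd j w)) p) = 0 := by
    intro j
    have e1 : ∀ i, epd i (epd i (epd j w)) p = epd j (epd i (epd i w)) p := by
      intro i
      have c1 : epd i (epd j w) = epd j (epd i w) := funext fun x => epd_comm hw' i j x
      rw [c1]
      exact epd_comm (contDiff_epd i hw') i j p
    rw [Finset.sum_congr rfl fun i _ => e1 i]
    rw [← epd_sum (fun i => hdiffT (contDiff_epd i (contDiff_epd i hw')) p) j]
    have e2 : (fun x => ∑ i, epd i (epd i w) x) = elap w := rfl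
    rw [e2, h3, epd_neg, hgrad0 j, neg_zero]
  -- Bochner-type middle term vanishes
  have T2eq : (∑ i, ∑ j, 2 * epd j w p * epd i (epd i (epd j w)) p) = 0 := by
    rw [Finset.sum_comm]
    apply Finset.sum_eq_zero
    intro j _
    rw [← Finset.mul_sum, hthird j, mul_zero]
  -- full Laplacian of Q at p
  have hsum : ∑ i, epd i (epd i Q) p
      = (∑ i, ∑ j, 2 * (epd i (epd j w) p) ^ 2)
        + ((∑ i, epd i (epd i A) p) * (u p)⁻¹
        - (∑ i, 2 * epd i A p * epd i u p) * ((u p) ^ 2)⁻¹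
        - (∑ i, A p * epd i (epd i u) p) * ((u p) ^ 2)⁻¹
        + (∑ i, 2 * A p * (epd i u p) ^ 2 * u p) * (((u p) ^ 2) ^ 2)⁻¹) := by
    rw [Finset.sum_congr rfl fun i _ => key i]
    rw [Finset.sum_add_distrib]
    congr 1
    · simp only [Finset.sum_add_distrib]
      rw [T2eq, add_zero]
    · simp only [Finset.sum_add_distrib, Finset.sum_sub_distrib, ← Finset.sum_mul]
  -- Laplacian of Q is nonpositive at p
  have hlap : ∑ i, epd i (epd i Q) p ≤ 0 :=
    Finset.sum_nonpos fun i _ => epd_epd_nonpos hQ' hmax i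
  -- scalar abbreviations
  set U := u p with hUdef
  set q := Q p with hqdef
  set a := A p with hadef
  set la := elap A p with hladef
  set H := ∑ i, ∑ j, (epd i (epd j w) p) ^ 2 with hHdef
  set gw := ∑ j, (epd j w p) ^ 2 with hgwdef
  set G := ∑ i, (epd i A p) ^ 2 with hGdef
  set S := ∑ i, epd i A p * epd i u p with hSdef
  have hU : 0 < U := hpos p
  have hUne : U ≠ 0 := ne_of_gt hU
  have hnn : (1:ℝ) ≤ (n:ℝ) := by exact_mod_cast hn
  have hnn0 : (0:ℝ) < (n:ℝ) := by linarith
  -- elap u p = -a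
  have N2 : elap u p = -a := by
    have := congrFun hA p
    rw [← hadef] at this
    linarith [this]
  -- q = gw + a/U
  have Fq : q = gw + a * U⁻¹ := by
    have := congrFun hQfun p
    rw [← hqdef] at this
    exact this
  have hgw0 : 0 ≤ gw := Finset.sum_nonneg fun j _ => sq_nonneg _
  have hG0 : 0 ≤ G := Finset.sum_nonneg fun j _ => sq_nonneg _
  have hgweq : gw = q - a * U⁻¹ := by linarith [Fq]
  -- Cauchy-Schwarz for the Hessian
  have FH : q ^ 2 ≤ (n:ℝ) * H := by
    have e0 : elap w p = -q := by
      have := congrFun h3 p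
      rw [← hqdef] at this
      exact this
    have st1 : (∑ i, epd i (epd i w) p) ^ 2 ≤ (n:ℝ) * ∑ i, (epd i (epd i w) p) ^ 2 := by
      simpa using sq_sum_le_card_mul_sum_sq
        (s := (Finset.univ : Finset (Fin n))) (f := fun i => epd i (epd i w) p)
    have st2 : (∑ i, (epd i (epd i w) p) ^ 2) ≤ H := by
      rw [hHdef]
      exact Finset.sum_le_sum fun i _ =>
        Finset.single_le_sum (f := fun j => (epd i (epd j w) p) ^ 2)
          (fun j _ => sq_nonneg _) (Finset.mem_univ i)
    have e1 : (∑ i, epd i (epd i w) p) = elap w p := rfl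
    calc q ^ 2 = (∑ i, epd i (epd i w) p) ^ 2 := by rw [e1, e0]; ring
      _ ≤ (n:ℝ) * ∑ i, (epd i (epd i w) p) ^ 2 := st1
      _ ≤ (n:ℝ) * H := by nlinarith [st2, hnn0]
  -- sum of (∂u)² in terms of gw
  have N4 : (∑ i, (epd i u p) ^ 2) = gw * U ^ 2 := by
    have e : ∀ j : Fin n, (epd j w p) ^ 2 * U ^ 2 = (epd j u p) ^ 2 := by
      intro j
      have := congrFun (h1 j) p
      rw [this]
      field_simp
      rw [hUdef, mul_div_assoc, div_self (pow_ne_zero 2 (hne p)), mul_one]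
    rw [hgwdef, Finset.sum_mul]
    exact (Finset.sum_congr rfl fun j _ => e j).symm
  -- fold the sums in hsum
  have hS2 : (∑ i, 2 * epd i A p * epd i u p) = 2 * S := by
    rw [hSdef, Finset.mul_sum]
    exact Finset.sum_congr rfl fun i _ => by ring
  have hS3 : (∑ i, A p * epd i (epd i u) p) = a * elap u p := by
    rw [← Finset.mul_sum, ← hadef]; rfl
  have hS4 : (∑ i, 2 * A p * (epd i u p) ^ 2 * u p) = 2 * a * U * (gw * U ^ 2) := by
    have e : ∀ i : Fin n, 2 * A p * (epd i u p) ^ 2 * u p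
        = (2 * a * U) * (epd i u p) ^ 2 := fun i => by
      rw [← hadef, ← hUdef]; ring
    rw [Finset.sum_congr rfl fun i _ => e i, ← Finset.mul_sum, N4]
  have hla : (∑ i, epd i (epd i A) p) = la := rfl
  have hHfold : (∑ i, ∑ j, 2 * (epd i (epd j w) p) ^ 2) = 2 * H := by
    rw [hHdef, Finset.mul_sum]
    exact Finset.sum_congr rfl fun i _ => by
      rw [Finset.mul_sum]
  -- the main differential inequality, with denominators
  have FL : 2 * H + (la * U⁻¹ - (2 * S) * (U ^ 2)⁻¹ - (a * elap u p) * (U ^ 2)⁻¹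
      + (2 * a * U * (gw * U ^ 2)) * ((U ^ 2) ^ 2)⁻¹) ≤ 0 := by
    have h0 := hlap
    rw [hsum, hHfold, hla, hS2, hS3, hS4] at h0
    exact h0
  -- clear denominators
  have FLpoly : 2 * H * U ^ 4 + la * U ^ 3 - 2 * S * U ^ 2 + a ^ 2 * U ^ 2
      + 2 * a * (q * U - a) * U ^ 2 ≤ 0 := by
    have e : 2 * H + (la * U⁻¹ - (2 * S) * (U ^ 2)⁻¹ - (a * elap u p) * (U ^ 2)⁻¹
        + (2 * a * U * (gw * U ^ 2)) * ((U ^ 2) ^ 2)⁻¹)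
        = (2 * H * U ^ 4 + la * U ^ 3 - 2 * S * U ^ 2 + a ^ 2 * U ^ 2
          + 2 * a * (q * U - a) * U ^ 2) * (U ^ 4)⁻¹ := by
      rw [N2, hgweq]
      field_simp
      ring
    have h1' : (2 * H * U ^ 4 + la * U ^ 3 - 2 * S * U ^ 2 + a ^ 2 * U ^ 2
        + 2 * a * (q * U - a) * U ^ 2) * (U ^ 4)⁻¹ ≤ 0 := by
      rw [← e]; exact FL
    have h4 : (0:ℝ) < U ^ 4 := by positivity
    calc 2 * H * U ^ 4 + la * U ^ 3 - 2 * S * U ^ 2 + a ^ 2 * U ^ 2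
          + 2 * a * (q * U - a) * U ^ 2
        = ((2 * H * U ^ 4 + la * U ^ 3 - 2 * S * U ^ 2 + a ^ 2 * U ^ 2
          + 2 * a * (q * U - a) * U ^ 2) * (U ^ 4)⁻¹) * U ^ 4 := by field_simp
      _ ≤ 0 * U ^ 4 := mul_le_mul_of_nonneg_right h1' h4.le
      _ = 0 := by ring
  -- Cauchy-Schwarz for the gradient term
  have FCSpoly : 4 * b * S ≤ G + 4 * b ^ 2 * (q * U - a) * U := by
    have e : ∀ i : Fin n, 4 * b * (epd i A p * epd i u p)
        ≤ (epd i A p) ^ 2 + 4 * b ^ 2 * (epd i u p) ^ 2 := by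
      intro i
      nlinarith [sq_nonneg (epd i A p - 2 * b * epd i u p)]
    have e2 : 4 * b * S ≤ ∑ i, ((epd i A p) ^ 2 + 4 * b ^ 2 * (epd i u p) ^ 2) := by
      rw [hSdef, Finset.mul_sum]
      exact Finset.sum_le_sum fun i _ => e i
    rw [Finset.sum_add_distrib, ← Finset.mul_sum, N4, hgweq] at e2
    calc 4 * b * S ≤ G + 4 * b ^ 2 * ((q - a * U⁻¹) * U ^ 2) := e2
      _ = G + 4 * b ^ 2 * (q * U - a) * U := by field_simp
  -- dichotomy
  by_cases hcase : q ≤ 2 * n * (b - a / U)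
  · exact Or.inl hcase
  · right
    push_neg at hcase
    have hlt' : 2 * (n:ℝ) * (b * U - a) < q * U := by
      have h0 : 2 * (n:ℝ) * (b - a / U) * U = 2 * (n:ℝ) * (b * U - a) := by
        field_simp
      calc 2 * (n:ℝ) * (b * U - a) = 2 * (n:ℝ) * (b - a / U) * U := h0.symm
        _ < q * U := mul_lt_mul_of_pos_right hcase hU
    rw [norm_egrad_sq, ← hGdef]
    have hgoal_eq : a ^ 2 / U ^ 2 + G / (2 * b * U ^ 2) - 2 * b * a / U - la / U
        = (2 * b * a ^ 2 * U ^ 2 + G * U ^ 2 - 4 * b ^ 2 * a * U ^ 3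
          - 2 * b * la * U ^ 3) * (2 * b * U ^ 4)⁻¹ := by
      field_simp
      ring
    rw [hgoal_eq]
    rw [show (n:ℝ) * ((2 * b * a ^ 2 * U ^ 2 + G * U ^ 2 - 4 * b ^ 2 * a * U ^ 3
          - 2 * b * la * U ^ 3) * (2 * b * U ^ 4)⁻¹)
        = ((n:ℝ) * (2 * b * a ^ 2 * U ^ 2 + G * U ^ 2 - 4 * b ^ 2 * a * U ^ 3
          - 2 * b * la * U ^ 3)) / (2 * b * U ^ 4) from by ring]
    rw [le_div_iff₀ (by positivity)]
    -- final polynomial inequality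
    have P1 : 4 * b * U ^ 4 * q ^ 2 ≤ 4 * b * U ^ 4 * ((n:ℝ) * H) :=
      mul_le_mul_of_nonneg_left FH (by positivity)
    have P2 : (n:ℝ) * U ^ 2 * (4 * b * S)
        ≤ (n:ℝ) * U ^ 2 * (G + 4 * b ^ 2 * (q * U - a) * U) :=
      mul_le_mul_of_nonneg_left FCSpoly (by positivity)
    have P3 : 2 * b * q * U ^ 3 * (2 * (n:ℝ) * (b * U - a))
        < 2 * b * q * U ^ 3 * (q * U) :=
      mul_lt_mul_of_pos_left hlt'
        (mul_pos (mul_pos (mul_pos (by norm_num : (0:ℝ) < 2) hb) hQp) (pow_pos hU 3))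
    have P4 : 2 * b * (n:ℝ) * (2 * H * U ^ 4 + la * U ^ 3 - 2 * S * U ^ 2
        + a ^ 2 * U ^ 2 + 2 * a * (q * U - a) * U ^ 2) ≤ 2 * b * (n:ℝ) * 0 :=
      mul_le_mul_of_nonneg_left FLpoly (by positivity)
    linarith [P1, P2, P3, P4]
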